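/- arXiv:2208.08529 — 4 statements merged into one kernel-verified Lean document; each statement's English description precedes it below -/
import Mathlib

section
/- For the planar system x' = xy, y' = y² − x − 1 with F(x,y) = (xy, y² − x − 1), the function φ₁(x,y) = x/(1 + x + y) satisfies ∇φ₁·F = φ₁ and the function φ₂(x,y) = x/(1 + x − y) satisfies ∇φ₂·F = −φ₂, wherever the denominators are nonzero. -/
/-! Both functions are `φₛ = x / (1 + x + s y)` with `s = ±1`. Writing `d = 1 + x + s y`, the
quotient rule gives `∇φₛ · F = (x y d - x (x y + s (y² - x - 1))) / d²`, and the numerator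
equals `s x d` as soon as `s² = 1`. -/

theorem HasFDerivAt.fun_div {𝕜 E : Type*} [NontriviallyNormedField 𝕜] [NormedAddCommGroup E]
    [NormedSpace 𝕜 E] {c d : E → 𝕜} {c' d' : E →L[𝕜] 𝕜} {x : E} (hc : HasFDerivAt c c' x)
    (hd : HasFDerivAt d d' x) (hx : d x ≠ 0) :
    HasFDerivAt (fun y => c y / d y) ((d x ^ 2)⁻¹ • (d x • c' - c x • d')) x := by
  simp only [div_eq_mul_inv]
  refine (hc.fun_mul ((hasFDerivAt_inv hx).comp x hd)).congr_fderiv ?_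
  ext v
  simp only [Function.comp_apply, add_apply, smul_apply, sub_apply, smul_eq_mul, mul_neg,
    ContinuousLinearMap.comp_apply, ContinuousLinearMap.toSpanSingleton_apply]
  field_simp
  ring

theorem fderiv_fst_div_one_add_fst_add_mul_snd_apply {s : ℝ} (hs : s ^ 2 = 1) (p : ℝ × ℝ)
    (hp : 1 + p.1 + s * p.2 ≠ 0) :
    fderiv ℝ (fun q : ℝ × ℝ => q.1 / (1 + q.1 + s * q.2)) p (p.1 * p.2, p.2 ^ 2 - p.1 - 1)
      = s * (p.1 / (1 + p.1 + s * p.2)) := by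
  have hden : HasFDerivAt (fun q : ℝ × ℝ => 1 + q.1 + s * q.2)
      (ContinuousLinearMap.fst ℝ ℝ ℝ + s • ContinuousLinearMap.snd ℝ ℝ ℝ) p :=
    (hasFDerivAt_fst.const_add 1).add (hasFDerivAt_snd.const_smul s)
  rw [(hasFDerivAt_fst.fun_div hden hp).fderiv]
  simp only [smul_add, add_apply, smul_apply, sub_apply, smul_eq_mul,
    ContinuousLinearMap.coe_fst', ContinuousLinearMap.coe_snd']
  field_simp
  linear_combination (-p.1 * p.2) * hs

theorem stmt_13
    (F : ℝ × ℝ → ℝ × ℝ) (hF : F = fun p => (p.1 * p.2, p.2 ^ 2 - p.1 - 1)) :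
    (∀ p : ℝ × ℝ, 1 + p.1 + p.2 ≠ 0 →
      fderiv ℝ (fun q : ℝ × ℝ => q.1 / (1 + q.1 + q.2)) p (F p)
        = p.1 / (1 + p.1 + p.2)) ∧
    (∀ p : ℝ × ℝ, 1 + p.1 - p.2 ≠ 0 →
      fderiv ℝ (fun q : ℝ × ℝ => q.1 / (1 + q.1 - q.2)) p (F p)
        = -(p.1 / (1 + p.1 - p.2))) := by
  subst hF
  refine ⟨fun p hp => ?_, fun p hp => ?_⟩
  · simpa using
      fderiv_fst_div_one_add_fst_add_mul_snd_apply (one_pow 2) p (by simpa using hp)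
  · simpa [← sub_eq_add_neg] using
      fderiv_fst_div_one_add_fst_add_mul_snd_apply (s := -1) (by norm_num) p
        (by simpa [← sub_eq_add_neg] using hp)
end

section
/- Let a = x₀/(1 + x₀ + y₀) and b = x₀/(1 + x₀ − y₀) with denominators nonzero. Then x(t) = 2ab/(a e^t + b e^{−t} − 2ab) and y(t) = (−a e^t + b e^{−t})/(a e^t + b e^{−t} − 2ab) satisfy x' = xy and y' = y² − x − 1 with x(0) = x₀, y(0) = y₀, on any interval where a e^t + b e^{−t} − 2ab ≠ 0. -/
/-!
Along the flow the Koopman eigenfunctions evolve as `φ₁ = a eᵗ` and `φ₂ = b e⁻ᵗ`; solving these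
two relations for `x` and `y` gives the stated formulas. Writing `D t = a eᵗ + b e⁻ᵗ - 2ab`, they
read `x = 2ab / D` and `y = -D' / D`, and since `D'' = D + 2ab` the system `x' = xy`,
`y' = y² - x - 1` follows from the quotient rule alone.
-/

open Real

section Riccati

variable {D D' : ℝ → ℝ} {c d t : ℝ}

theorem hasDerivAt_const_div_eq_mul_neg_div (hD : HasDerivAt D d t) (ht : D t ≠ 0) :
    HasDerivAt (fun s => c / D s) (c / D t * (-d / D t)) t :=
  ((hasDerivAt_const t c).div hD ht).congr_deriv (by field_simp; ring)

theorem hasDerivAt_neg_div_of_second_deriv_eq_add_const (hD : HasDerivAt D (D' t) t)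
    (hD' : HasDerivAt D' (D t + c) t) (ht : D t ≠ 0) :
    HasDerivAt (fun s => -D' s / D s) ((-D' t / D t) ^ 2 - c / D t - 1) t :=
  (hD'.neg.div hD ht).congr_deriv (by rw [Pi.neg_apply]; field_simp; ring)

end Riccati

theorem hasDerivAt_mul_exp_add_mul_exp_neg (a b t : ℝ) :
    HasDerivAt (fun s => a * exp s + b * exp (-s)) (a * exp t - b * exp (-t)) t :=
  (((hasDerivAt_exp t).const_mul a).add ((hasDerivAt_neg t).exp.const_mul b)).congr_deriv
    (by ring)

theorem koopman_eigenfunctions_inverse {x₀ y₀ a b : ℝ} (h₁ : 1 + x₀ + y₀ ≠ 0)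
    (h₂ : 1 + x₀ - y₀ ≠ 0) (ha : a = x₀ / (1 + x₀ + y₀)) (hb : b = x₀ / (1 + x₀ - y₀))
    (hD0 : a + b - 2 * a * b ≠ 0) :
    2 * a * b / (a + b - 2 * a * b) = x₀ ∧ (-a + b) / (a + b - 2 * a * b) = y₀ := by
  have hden : a + b - 2 * a * b = 2 * x₀ / ((1 + x₀ + y₀) * (1 + x₀ - y₀)) := by
    rw [ha, hb]
    field_simp
    ring
  have hx₀ : x₀ ≠ 0 := by
    rintro rfl
    simp [hden] at hD0
  rw [hden, ha, hb]
  constructor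
  · field_simp
  · field_simp
    ring

theorem stmt_14 (x₀ y₀ a b : ℝ)
    (h₁ : 1 + x₀ + y₀ ≠ 0) (h₂ : 1 + x₀ - y₀ ≠ 0)
    (ha : a = x₀ / (1 + x₀ + y₀)) (hb : b = x₀ / (1 + x₀ - y₀))
    (x y : ℝ → ℝ)
    (hx : x = fun t => 2 * a * b / (a * Real.exp t + b * Real.exp (-t) - 2 * a * b))
    (hy : y = fun t => (-(a * Real.exp t) + b * Real.exp (-t)) /
        (a * Real.exp t + b * Real.exp (-t) - 2 * a * b))
    (hD0 : a + b - 2 * a * b ≠ 0) :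
    x 0 = x₀ ∧ y 0 = y₀ ∧
    ∀ t : ℝ, a * Real.exp t + b * Real.exp (-t) - 2 * a * b ≠ 0 →
      HasDerivAt x (x t * y t) t ∧ HasDerivAt y ((y t) ^ 2 - x t - 1) t := by
  subst hx hy
  refine ⟨?_, ?_, fun t ht => ?_⟩
  · simpa using (koopman_eigenfunctions_inverse h₁ h₂ ha hb hD0).1
  · simpa using (koopman_eigenfunctions_inverse h₁ h₂ ha hb hD0).2
  set D := fun s => a * exp s + b * exp (-s) - 2 * a * b
  set D' := fun s => a * exp s - b * exp (-s)
  have hD : HasDerivAt D (D' t) t :=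
    (hasDerivAt_mul_exp_add_mul_exp_neg a b t).sub_const (2 * a * b)
  have hD' : HasDerivAt D' (D t + 2 * a * b) t := by
    convert hasDerivAt_mul_exp_add_mul_exp_neg a (-b) t using 1 <;> simp [D, D', sub_eq_add_neg]
  have hy : (fun s => (-(a * exp s) + b * exp (-s)) / D s) = fun s => -D' s / D s := by
    simp only [D', neg_sub, neg_add_eq_sub]
  rw [hy]
  exact ⟨hasDerivAt_const_div_eq_mul_neg_div hD ht,
    hasDerivAt_neg_div_of_second_deriv_eq_add_const hD hD' ht⟩
end

section
/- For the planar system x' = x − xy, y' = −x − y − y² with F(x,y) = (x − xy, −x − y − y²), the functions M₁ = x, M₂ = x + 2y, M₃ = 1 + x + y satisfy ∇M₁·F = M₁(1 − y), ∇M₂·F = M₂(−1 − y), and ∇M₃·F = M₃(−y). Consequently φ₁ = M₃/M₁ and φ₂ = M₃/M₂ satisfy ∇φ₁·F = −φ₁ and ∇φ₂·F = φ₂ where the denominators are nonzero. -/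
/-!
The lines `M₁ = 0`, `M₂ = 0`, `M₃ = 0` are invariant under the flow: each `Mᵢ` is a Darboux
polynomial, `∇Mᵢ·F = Mᵢ kᵢ` with cofactors `k₁ = 1 - y`, `k₂ = -1 - y`, `k₃ = -y`. By the quotient
rule a quotient of Darboux functions is again Darboux, with the difference of the cofactors as
cofactor; for `M₃/M₁` and `M₃/M₂` these differences are the constants `-1` and `1`.
-/

theorem fderiv_div_apply_of_cofactors {E : Type*} [NormedAddCommGroup E] [NormedSpace ℝ E]
    {f g : E → ℝ} {p v : E} {a b : ℝ} (hf : DifferentiableAt ℝ f p)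
    (hg : DifferentiableAt ℝ g p) (hgp : g p ≠ 0) (hfa : fderiv ℝ f p v = f p * a)
    (hgb : fderiv ℝ g p v = g p * b) :
    fderiv ℝ (fun q => f q / g q) p v = f p / g p * (a - b) := by
  have h := hf.hasFDerivAt.fun_mul ((hasDerivAt_inv hgp).comp_hasFDerivAt p hg.hasFDerivAt)
  simp only [div_eq_mul_inv, Function.comp_apply] at h ⊢
  rw [h.fderiv]
  simp only [add_apply, neg_apply, smul_apply, neg_smul, smul_neg, smul_eq_mul, hfa, hgb]
  field_simp
  ring

theorem stmt_15
    (F : ℝ × ℝ → ℝ × ℝ)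
    (hF : F = fun p => (p.1 - p.1 * p.2, -p.1 - p.2 - p.2 ^ 2)) :
    (∀ p : ℝ × ℝ, fderiv ℝ (fun q : ℝ × ℝ => q.1) p (F p) = p.1 * (1 - p.2)) ∧
    (∀ p : ℝ × ℝ, fderiv ℝ (fun q : ℝ × ℝ => q.1 + 2 * q.2) p (F p)
        = (p.1 + 2 * p.2) * (-1 - p.2)) ∧
    (∀ p : ℝ × ℝ, fderiv ℝ (fun q : ℝ × ℝ => 1 + q.1 + q.2) p (F p)
        = (1 + p.1 + p.2) * (-p.2)) ∧
    (∀ p : ℝ × ℝ, p.1 ≠ 0 →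
      fderiv ℝ (fun q : ℝ × ℝ => (1 + q.1 + q.2) / q.1) p (F p)
        = -((1 + p.1 + p.2) / p.1)) ∧
    (∀ p : ℝ × ℝ, p.1 + 2 * p.2 ≠ 0 →
      fderiv ℝ (fun q : ℝ × ℝ => (1 + q.1 + q.2) / (q.1 + 2 * q.2)) p (F p)
        = (1 + p.1 + p.2) / (p.1 + 2 * p.2)) := by
  have hM₁ (p : ℝ × ℝ) : fderiv ℝ (fun q : ℝ × ℝ => q.1) p (F p) = p.1 * (1 - p.2) := by
    simp only [hF, fderiv_fst, ContinuousLinearMap.coe_fst']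
    ring
  have hM₂ (p : ℝ × ℝ) :
      fderiv ℝ (fun q : ℝ × ℝ => q.1 + 2 * q.2) p (F p) = (p.1 + 2 * p.2) * (-1 - p.2) := by
    rw [fderiv_fun_add (by fun_prop) (by fun_prop), fderiv_const_mul (by fun_prop)]
    simp only [hF, fderiv_fst, fderiv_snd, add_apply, smul_apply, smul_eq_mul,
      ContinuousLinearMap.coe_fst', ContinuousLinearMap.coe_snd']
    ring
  have hM₃ (p : ℝ × ℝ) :
      fderiv ℝ (fun q : ℝ × ℝ => 1 + q.1 + q.2) p (F p) = (1 + p.1 + p.2) * (-p.2) := by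
    rw [fderiv_fun_add (by fun_prop) (by fun_prop), fderiv_const_add]
    simp only [hF, fderiv_fst, fderiv_snd, add_apply,
      ContinuousLinearMap.coe_fst', ContinuousLinearMap.coe_snd']
    ring
  refine ⟨hM₁, hM₂, hM₃, fun p hp => ?_, fun p hp => ?_⟩
  · rw [fderiv_div_apply_of_cofactors (by fun_prop) (by fun_prop) hp (hM₃ p) (hM₁ p)]
    ring
  · rw [fderiv_div_apply_of_cofactors (g := fun q : ℝ × ℝ => q.1 + 2 * q.2) (by fun_prop)
      (by fun_prop) hp (hM₃ p) (hM₂ p)]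
    ring
end

section
/- For the planar system x' = x − xy, y' = −y + x² − 2y² with F(x,y) = (x − xy, −y + x² − 2y²), the functions M₁ = x, M₂ = x² − 3y, M₃ = 1 − x² + 2y satisfy ∇M₁·F = M₁(1 − y), ∇M₂·F = M₂(−1 − 2y), and ∇M₃·F = M₃(−2y). Consequently φ₁ = −3M₃/M₂ satisfies ∇φ₁·F = φ₁ and φ₂ = M₃/M₁² satisfies ∇φ₂·F = −2φ₂ where denominators are nonzero. -/
/-!
Differentiation along `F` is a derivation, so functions `M` with `∇M·F = M·K` (Darboux functions
with cofactor `K`) are closed under products, powers and quotients, with the cofactors adding,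
scaling and subtracting. `M₁`, `M₂`, `M₃` are polynomial Darboux functions with cofactors `1 - y`,
`-1 - 2y`, `-2y`; the combinations `M₃ / M₂` and `M₃ / M₁²` have the constant cofactors
`-2y - (-1 - 2y) = 1` and `-2y - 2(1 - y) = -2`, i.e. they are Koopman eigenfunctions.
-/

open ContinuousLinearMap

section Cofactor

variable {𝕜 E : Type*} [NontriviallyNormedField 𝕜] [NormedAddCommGroup E] [NormedSpace 𝕜 E]
  {M N : E → 𝕜} {a b : 𝕜} {p v : E}

variable (𝕜) in
def HasCofactorAt (M : E → 𝕜) (a : 𝕜) (p v : E) : Prop :=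
  DifferentiableAt 𝕜 M p ∧ fderiv 𝕜 M p v = M p * a

theorem hasCofactorAt_const (c : 𝕜) (p v : E) : HasCofactorAt 𝕜 (fun _ => c) 0 p v :=
  ⟨differentiableAt_const c, by simp⟩

theorem HasCofactorAt.mul (hM : HasCofactorAt 𝕜 M a p v) (hN : HasCofactorAt 𝕜 N b p v) :
    HasCofactorAt 𝕜 (fun q => M q * N q) (a + b) p v := by
  refine ⟨hM.1.mul hN.1, ?_⟩
  rw [fderiv_fun_mul hM.1 hN.1]
  simp only [add_apply, smul_apply, smul_eq_mul, hM.2, hN.2]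
  ring

theorem HasCofactorAt.const_mul (hM : HasCofactorAt 𝕜 M a p v) (c : 𝕜) :
    HasCofactorAt 𝕜 (fun q => c * M q) a p v := by
  simpa using (hasCofactorAt_const c p v).mul hM

theorem HasCofactorAt.pow (hM : HasCofactorAt 𝕜 M a p v) (n : ℕ) :
    HasCofactorAt 𝕜 (fun q => M q ^ n) (n * a) p v := by
  induction n with
  | zero => simpa using hasCofactorAt_const (1 : 𝕜) p v
  | succ n ih =>
    simpa only [pow_succ, Nat.cast_succ, add_one_mul] using ih.mul hM

theorem HasCofactorAt.inv (hN : HasCofactorAt 𝕜 N b p v) (hNp : N p ≠ 0) :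
    HasCofactorAt 𝕜 (fun q => (N q)⁻¹) (-b) p v := by
  refine ⟨hN.1.inv hNp, ?_⟩
  have hinv : HasFDerivAt (fun q => (N q)⁻¹) _ p := (hasFDerivAt_inv hNp).comp p hN.1.hasFDerivAt
  rw [hinv.fderiv]
  simp only [comp_apply, toSpanSingleton_apply, smul_eq_mul, hN.2]
  field_simp

theorem HasCofactorAt.div (hM : HasCofactorAt 𝕜 M a p v) (hN : HasCofactorAt 𝕜 N b p v)
    (hNp : N p ≠ 0) : HasCofactorAt 𝕜 (fun q => M q / N q) (a - b) p v := by
  simpa only [div_eq_mul_inv, sub_eq_add_neg] using hM.mul (hN.inv hNp)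

end Cofactor

namespace KoopmanExample

def vectorField (p : ℝ × ℝ) : ℝ × ℝ := (p.1 - p.1 * p.2, -p.2 + p.1 ^ 2 - 2 * p.2 ^ 2)

def M₁ : ℝ × ℝ → ℝ := fun q => q.1

def M₂ : ℝ × ℝ → ℝ := fun q => q.1 ^ 2 - 3 * q.2

def M₃ : ℝ × ℝ → ℝ := fun q => 1 - q.1 ^ 2 + 2 * q.2

theorem fderiv_M₁_apply (p v : ℝ × ℝ) : fderiv ℝ M₁ p v = v.1 := by
  unfold M₁
  simp [fderiv_fst]

theorem fderiv_M₂_apply (p v : ℝ × ℝ) : fderiv ℝ M₂ p v = 2 * p.1 * v.1 - 3 * v.2 := by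
  unfold M₂
  simp (disch := fun_prop) [fderiv_fun_sub, fderiv_fun_pow, fderiv_const_mul, fderiv_fst,
    fderiv_snd]

theorem fderiv_M₃_apply (p v : ℝ × ℝ) : fderiv ℝ M₃ p v = -2 * p.1 * v.1 + 2 * v.2 := by
  unfold M₃
  simp (disch := fun_prop) [fderiv_fun_sub, fderiv_fun_add, fderiv_fun_pow, fderiv_const_mul,
    fderiv_fst, fderiv_snd]

theorem hasCofactorAt_M₁ (p : ℝ × ℝ) : HasCofactorAt ℝ M₁ (1 - p.2) p (vectorField p) := by
  refine ⟨by unfold M₁; fun_prop, ?_⟩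
  rw [fderiv_M₁_apply]
  simp only [M₁, vectorField]
  ring

theorem hasCofactorAt_M₂ (p : ℝ × ℝ) : HasCofactorAt ℝ M₂ (-1 - 2 * p.2) p (vectorField p) := by
  refine ⟨by unfold M₂; fun_prop, ?_⟩
  rw [fderiv_M₂_apply]
  simp only [M₂, vectorField]
  ring

theorem hasCofactorAt_M₃ (p : ℝ × ℝ) : HasCofactorAt ℝ M₃ (-2 * p.2) p (vectorField p) := by
  refine ⟨by unfold M₃; fun_prop, ?_⟩
  rw [fderiv_M₃_apply]
  simp only [M₃, vectorField]
  ring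

theorem hasCofactorAt_φ₁ {p : ℝ × ℝ} (hp : M₂ p ≠ 0) :
    HasCofactorAt ℝ (fun q => -3 * M₃ q / M₂ q) 1 p (vectorField p) := by
  convert ((hasCofactorAt_M₃ p).const_mul (-3)).div (hasCofactorAt_M₂ p) hp using 1
  ring

theorem hasCofactorAt_φ₂ {p : ℝ × ℝ} (hp : M₁ p ≠ 0) :
    HasCofactorAt ℝ (fun q => M₃ q / M₁ q ^ 2) (-2) p (vectorField p) := by
  convert (hasCofactorAt_M₃ p).div ((hasCofactorAt_M₁ p).pow 2) (pow_ne_zero 2 hp) using 1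
  push_cast
  ring

end KoopmanExample

theorem stmt_17
    (F : ℝ × ℝ → ℝ × ℝ)
    (hF : F = fun p => (p.1 - p.1 * p.2, -p.2 + p.1 ^ 2 - 2 * p.2 ^ 2)) :
    (∀ p : ℝ × ℝ, fderiv ℝ (fun q : ℝ × ℝ => q.1) p (F p) = p.1 * (1 - p.2)) ∧
    (∀ p : ℝ × ℝ, fderiv ℝ (fun q : ℝ × ℝ => q.1 ^ 2 - 3 * q.2) p (F p)
        = (p.1 ^ 2 - 3 * p.2) * (-1 - 2 * p.2)) ∧
    (∀ p : ℝ × ℝ, fderiv ℝ (fun q : ℝ × ℝ => 1 - q.1 ^ 2 + 2 * q.2) p (F p)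
        = (1 - p.1 ^ 2 + 2 * p.2) * (-2 * p.2)) ∧
    (∀ p : ℝ × ℝ, p.1 ^ 2 - 3 * p.2 ≠ 0 →
      fderiv ℝ (fun q : ℝ × ℝ => -3 * (1 - q.1 ^ 2 + 2 * q.2) / (q.1 ^ 2 - 3 * q.2)) p (F p)
        = -3 * (1 - p.1 ^ 2 + 2 * p.2) / (p.1 ^ 2 - 3 * p.2)) ∧
    (∀ p : ℝ × ℝ, p.1 ≠ 0 →
      fderiv ℝ (fun q : ℝ × ℝ => (1 - q.1 ^ 2 + 2 * q.2) / q.1 ^ 2) p (F p)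
        = -2 * ((1 - p.1 ^ 2 + 2 * p.2) / p.1 ^ 2)) := by
  subst hF
  open KoopmanExample in
  exact ⟨fun p => (hasCofactorAt_M₁ p).2, fun p => (hasCofactorAt_M₂ p).2,
    fun p => (hasCofactorAt_M₃ p).2, fun p hp => (hasCofactorAt_φ₁ hp).2.trans (mul_one _),
    fun p hp => (hasCofactorAt_φ₂ hp).2.trans (mul_comm _ _)⟩
end
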